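/- arXiv:0903.0726 — 2 statements merged into one kernel-verified Lean document; each statement's English description precedes it below -/
import Mathlib

section
/- (Proposition A.1) Let {V_i} be a sequence of random variables such that, for some function h, h(V_1, …, V_n) converges in distribution as n → ∞ to a random variable Ξ with distribution function G. If {U_n} is a sequence of random variables such that P{U_n − h(V_1, …, V_n) ≤ s | V_1, …, V_n} → F(s) almost surely for all s ∈ ℝ, where F is a continuous distribution function, then P(U_n ≤ t) → (G * F)(t) for all t ∈ ℝ, where * denotes convolution, i.e., (G * F)(t) = ∫ F(t − x) dG(x). -/
/-!
Write `H_n = h(V_1, …, V_n)` and `Y_n = U_n − H_n`, so that `U_n = H_n + Y_n`. If `A_n` is a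
`σ(V_1, …, V_n)`-measurable event with `P(A_n) → c`, then `P(A_n ∩ {Y_n ≤ s}) → F(s) c`, because the
conditional probabilities of `{Y_n ≤ s}` converge to `F(s)` in `L¹` (dominated convergence). With
`A_n = {a < H_n ≤ b}` for continuity points `a ≤ b` of `G`, every rectangle `(a, b] × (-∞, s]`
thus receives from `(H_n, Y_n)` asymptotically the mass it has under `G ⊗ F`.

Cutting the first axis at continuity points `x_0 < ⋯ < x_k` of `G` bounds `P(H_n + Y_n ≤ t)` from
above and below by finite sums of such rectangle probabilities; the limiting sums bound
`(G ⊗ F){x + y ≤ t} = ∫ F(t − x) dG(x)` in the same way. As `F` is uniformly continuous, a fine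
enough partition makes the two limiting sums `ε`-close.
-/

open MeasureTheory Filter Set Topology

theorem Continuous.uniformContinuous_of_tendsto_atBot_atTop {f : ℝ → ℝ} (hf : Continuous f)
    {a b : ℝ} (ha : Tendsto f atBot (𝓝 a)) (hb : Tendsto f atTop (𝓝 b)) :
    UniformContinuous f := by
  -- `f` differs from a clamped affine function with the same limits by a function vanishing
  -- at infinity.
  set c : ℝ → ℝ := fun x => a + (b - a) * max 0 (min x 1)
  have hc : UniformContinuous c := uniformContinuous_const.add
    ((((LipschitzWith.id.min_const 1).const_max 0).uniformContinuous).const_mul' (b - a))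
  have hca : ∀ᶠ x in atBot, c x = a := by
    filter_upwards [eventually_le_atBot 0] with x hx
    simp [c, min_eq_left (hx.trans zero_le_one), hx]
  have hcb : ∀ᶠ x in atTop, c x = b := by
    filter_upwards [eventually_ge_atTop 1] with x hx
    simp [c, hx]
  have hfc : Tendsto (fun x => f x - c x) (cocompact ℝ) (𝓝 0) := by
    rw [cocompact_eq_atBot_atTop, tendsto_sup]
    exact ⟨by simpa using ha.sub (tendsto_const_nhds.congr' (hca.mono fun x hx => hx.symm)),
      by simpa using hb.sub (tendsto_const_nhds.congr' (hcb.mono fun x hx => hx.symm))⟩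
  simpa using ((hf.sub hc.continuous).uniformContinuous_of_tendsto_cocompact hfc).add hc

theorem exists_strictMono_mem_dense_fine_partition {D : Set ℝ} (hD : Dense D) {G g : ℝ → ℝ}
    (hG : Tendsto G atBot (𝓝 0)) (hg : UniformContinuous g) (hg0 : Tendsto g atTop (𝓝 0))
    {ε : ℝ} (hε : 0 < ε) :
    ∃ (k : ℕ) (x : ℕ → ℝ), StrictMono x ∧ (∀ j, x j ∈ D) ∧ G (x 0) ≤ ε ∧ g (x k) ≤ ε ∧
      ∀ j, dist (g (x j)) (g (x (j + 1))) < ε := by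
  obtain ⟨δ, hδ, hgδ⟩ := Metric.uniformContinuous_iff.1 hg ε hε
  obtain ⟨a, ha⟩ := eventually_atBot.1 (hG.eventually_le_const hε)
  obtain ⟨b, hb⟩ := eventually_atTop.1 (hg0.eventually_le_const hε)
  have hcell (j : ℕ) : ∃ y ∈ D, a + (j - 1) * (δ / 2) < y ∧ y < a + j * (δ / 2) :=
    hD.exists_between (by linarith)
  choose x hxD hx_gt hx_lt using hcell
  obtain ⟨k, hk⟩ := exists_nat_ge ((b - a) / (δ / 2) + 1)
  have hk' : b ≤ a + (k - 1) * (δ / 2) := by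
    have := (div_le_iff₀ (half_pos hδ)).1 (le_sub_iff_add_le.2 hk)
    linarith
  have hx_succ (j : ℕ) : a + j * (δ / 2) < x (j + 1) ∧ x (j + 1) < a + (j + 1) * (δ / 2) := by
    have := hx_gt (j + 1)
    have := hx_lt (j + 1)
    push_cast at *
    constructor <;> linarith
  refine ⟨k, x, strictMono_nat_of_lt_succ fun j => (hx_lt j).trans (hx_succ j).1, hxD, ha _ ?_,
    hb _ ?_, fun j => hgδ ?_⟩
  · simpa using (hx_lt 0).le
  · linarith [hx_gt k]
  · rw [Real.dist_eq, abs_sub_comm, abs_lt]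
    constructor <;> linarith [hx_gt j, hx_lt j, (hx_succ j).1, (hx_succ j).2]

section CondExp

variable {Ω : Type*} {mΩ : MeasurableSpace Ω} {μ : Measure Ω} [IsFiniteMeasure μ]

theorem abs_measureReal_inter_sub_le_integral_abs_condExp {m : MeasurableSpace Ω} (hm : m ≤ mΩ)
    {A B : Set Ω} (hA : MeasurableSet[m] A) (hB : MeasurableSet[mΩ] B) (p : ℝ) :
    |μ.real (A ∩ B) - p * μ.real A| ≤
      ∫ ω, |μ[B.indicator (fun _ => (1 : ℝ)) | m] ω - p| ∂μ := by
  set φ := μ[B.indicator (fun _ => (1 : ℝ)) | m]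
  have hφ : ∫ ω in A, φ ω ∂μ = μ.real (A ∩ B) := by
    rw [setIntegral_condExp hm ((integrable_const (1 : ℝ)).indicator hB) hA,
      setIntegral_indicator hB, setIntegral_const, smul_eq_mul, mul_one]
  calc |μ.real (A ∩ B) - p * μ.real A|
      = |∫ ω in A, (φ ω - p) ∂μ| := by
        rw [integral_sub integrable_condExp.integrableOn (integrable_const p).integrableOn, hφ,
          setIntegral_const, smul_eq_mul, mul_comm]
    _ ≤ ∫ ω in A, |φ ω - p| ∂μ := abs_integral_le_integral_abs
    _ ≤ ∫ ω, |φ ω - p| ∂μ :=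
        setIntegral_le_integral (integrable_condExp.sub (integrable_const p)).abs
          (Eventually.of_forall fun _ => abs_nonneg _)

theorem tendsto_integral_abs_condExp_indicator_sub {m : ℕ → MeasurableSpace Ω} {B : ℕ → Set Ω}
    {p : ℝ} (hconv : ∀ᵐ ω ∂μ,
      Tendsto (fun n => μ[(B n).indicator (fun _ => (1 : ℝ)) | m n] ω) atTop (𝓝 p)) :
    Tendsto (fun n => ∫ ω, |μ[(B n).indicator (fun _ => (1 : ℝ)) | m n] ω - p| ∂μ) atTop
      (𝓝 0) := by
  have hbdd (n : ℕ) : ∀ᵐ ω ∂μ, |μ[(B n).indicator (fun _ => (1 : ℝ)) | m n] ω| ≤ 1 :=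
    ae_bdd_abs_condExp_of_ae_bdd_abs <| Eventually.of_forall fun ω => by
      by_cases hω : ω ∈ B n <;> simp [hω]
  have h := tendsto_integral_of_dominated_convergence (fun _ => 1 + |p|)
    (fun n => (integrable_condExp.sub (integrable_const p)).abs.aestronglyMeasurable)
    (integrable_const _)
    (fun n => (hbdd n).mono fun ω hω => by
      rw [Real.norm_eq_abs, abs_abs]
      exact (abs_sub _ _).trans (by linarith))
    (hconv.mono fun ω hω => by simpa using (hω.sub_const p).abs)
  rwa [integral_zero] at h

theorem tendsto_measureReal_inter_of_tendsto_condExp {m : ℕ → MeasurableSpace Ω}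
    (hm : ∀ n, m n ≤ mΩ) {A B : ℕ → Set Ω} (hA : ∀ n, MeasurableSet[m n] (A n))
    (hB : ∀ n, MeasurableSet[mΩ] (B n)) {p c : ℝ}
    (hconv : ∀ᵐ ω ∂μ,
      Tendsto (fun n => μ[(B n).indicator (fun _ => (1 : ℝ)) | m n] ω) atTop (𝓝 p))
    (hA_lim : Tendsto (fun n => μ.real (A n)) atTop (𝓝 c)) :
    Tendsto (fun n => μ.real (A n ∩ B n)) atTop (𝓝 (p * c)) := by
  have hdiff : Tendsto (fun n => μ.real (A n ∩ B n) - p * μ.real (A n)) atTop (𝓝 0) :=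
    squeeze_zero_norm
      (fun n => abs_measureReal_inter_sub_le_integral_abs_condExp (hm n) (hA n) (hB n) p)
      (tendsto_integral_abs_condExp_indicator_sub hconv)
  simpa using hdiff.add (hA_lim.const_mul p)

theorem tendsto_measureReal_preimage_Ioc_inter_of_tendsto_condExp {m : ℕ → MeasurableSpace Ω}
    (hm : ∀ n, m n ≤ mΩ) {X Y : ℕ → Ω → ℝ} (hX : ∀ n, Measurable[m n] (X n))
    (hY : ∀ n, Measurable[mΩ] (Y n)) {a b s ca cb p : ℝ} (hab : a ≤ b)
    (ha : Tendsto (fun n => μ.real (X n ⁻¹' Iic a)) atTop (𝓝 ca))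
    (hb : Tendsto (fun n => μ.real (X n ⁻¹' Iic b)) atTop (𝓝 cb))
    (hconv : ∀ᵐ ω ∂μ,
      Tendsto (fun n => μ[(Y n ⁻¹' Iic s).indicator (fun _ => (1 : ℝ)) | m n] ω) atTop (𝓝 p)) :
    Tendsto (fun n => μ.real (X n ⁻¹' Ioc a b ∩ Y n ⁻¹' Iic s)) atTop (𝓝 (p * (cb - ca))) := by
  have hIoc : Tendsto (fun n => μ.real (X n ⁻¹' Ioc a b)) atTop (𝓝 (cb - ca)) := by
    refine (hb.sub ha).congr fun n => ?_
    rw [← Iic_sdiff_Iic, preimage_sdiff, measureReal_sdiff (preimage_mono (Iic_subset_Iic.2 hab))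
      ((hm n) _ (hX n measurableSet_Iic))]
  exact tendsto_measureReal_inter_of_tendsto_condExp hm (fun n => hX n measurableSet_Ioc)
    (fun n => hY n measurableSet_Iic) hconv hIoc

end CondExp

theorem StieltjesFunction.measureReal_Iic (f : StieltjesFunction ℝ) (hf : Tendsto f atBot (𝓝 0))
    (x : ℝ) : f.measure.real (Iic x) = f x := by
  rw [measureReal_def, f.measure_Iic hf, sub_zero,
    ENNReal.toReal_ofReal (f.mono.le_of_tendsto hf x)]

theorem StieltjesFunction.measureReal_Ioc (f : StieltjesFunction ℝ) {a b : ℝ} (hab : a ≤ b) :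
    f.measure.real (Ioc a b) = f b - f a := by
  rw [measureReal_def, f.measure_Ioc, ENNReal.toReal_ofReal (sub_nonneg.2 (f.mono hab))]

theorem integral_comp_sub_eq_measureReal_prod {ρ : Measure ℝ} [SFinite ρ]
    (f : StieltjesFunction ℝ) (hf : Tendsto f atBot (𝓝 0)) (t : ℝ) :
    ∫ x, f (t - x) ∂ρ = (ρ.prod f.measure).real {p | p.1 + p.2 ≤ t} := by
  have hslice (x : ℝ) : Prod.mk x ⁻¹' {p : ℝ × ℝ | p.1 + p.2 ≤ t} = Iic (t - x) := by
    ext y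
    simp [le_sub_iff_add_le']
  have hmeas : Measurable fun x => f (t - x) :=
    f.mono.measurable.comp (measurable_const.sub measurable_id)
  rw [measureReal_def, Measure.prod_apply (measurableSet_le (by fun_prop) measurable_const),
    integral_eq_lintegral_of_nonneg_ae (ae_of_all _ fun x => f.mono.le_of_tendsto hf _)
      hmeas.aestronglyMeasurable]
  simp_rw [hslice, f.measure_Iic hf, sub_zero]

theorem tendsto_of_forall_bracket {ι : Type*} {l : Filter ι} {u : ι → ℝ} {c : ℝ}
    (h : ∀ ε > 0, ∃ (lo up : ι → ℝ) (a b : ℝ), Tendsto lo l (𝓝 a) ∧ Tendsto up l (𝓝 b) ∧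
      (∀ n, lo n ≤ u n ∧ u n ≤ up n) ∧ a ≤ c ∧ c ≤ b ∧ b - a ≤ ε) :
    Tendsto u l (𝓝 c) := by
  refine tendsto_order.2 ⟨fun a' ha' => ?_, fun b' hb' => ?_⟩
  · obtain ⟨lo, _, a, b, hlo, -, hu, -, hcb, hab⟩ := h ((c - a') / 2) (by linarith)
    exact (hlo.eventually (lt_mem_nhds (by linarith))).mono fun n hn => hn.trans_le (hu n).1
  · obtain ⟨_, up, a, b, -, hup, hu, hac, -, hab⟩ := h ((b' - c) / 2) (by linarith)
    exact (hup.eventually (gt_mem_nhds (by linarith))).mono fun n hn => (hu n).2.trans_lt hn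

section CellSums

variable {Ω : Type*} [MeasurableSpace Ω]

def lowerCellSum (μ : Measure Ω) (X Y : Ω → ℝ) (x : ℕ → ℝ) (k : ℕ) (t : ℝ) : ℝ :=
  ∑ j ∈ Finset.range k, μ.real (X ⁻¹' Ioc (x j) (x (j + 1)) ∩ Y ⁻¹' Iic (t - x (j + 1)))

def upperCellSum (μ : Measure Ω) (X Y : Ω → ℝ) (x : ℕ → ℝ) (k : ℕ) (t : ℝ) : ℝ :=
  μ.real (X ⁻¹' Iic (x 0)) +
    ∑ j ∈ Finset.range k, μ.real (X ⁻¹' Ioc (x j) (x (j + 1)) ∩ Y ⁻¹' Iic (t - x j)) +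
    μ.real (Y ⁻¹' Iic (t - x k))

variable {μ : Measure Ω} [IsFiniteMeasure μ] {X Y : Ω → ℝ} {x : ℕ → ℝ} {k : ℕ} {t : ℝ}

theorem lowerCellSum_le (hX : Measurable X) (hY : Measurable Y) (hx : Monotone x) :
    lowerCellSum μ X Y x k t ≤ μ.real {ω | X ω + Y ω ≤ t} := by
  rw [lowerCellSum, ← measureReal_biUnion_finset]
  · refine measureReal_mono fun ω hω => ?_
    simp only [mem_iUnion, mem_inter_iff, mem_preimage, mem_Ioc, mem_Iic] at hω
    obtain ⟨j, -, ⟨-, hXj⟩, hYj⟩ := hω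
    show X ω + Y ω ≤ t
    linarith
  · exact fun i _ j _ hij =>
      ((hx.pairwise_disjoint_on_Ioc_succ hij).preimage X).mono inter_subset_left inter_subset_left
  · exact fun j _ => (hX measurableSet_Ioc).inter (hY measurableSet_Iic)

theorem le_upperCellSum : μ.real {ω | X ω + Y ω ≤ t} ≤ upperCellSum μ X Y x k t := by
  have hcover : {ω | X ω + Y ω ≤ t} ⊆ X ⁻¹' Iic (x 0) ∪
      (⋃ j ∈ Finset.range k, X ⁻¹' Ioc (x j) (x (j + 1)) ∩ Y ⁻¹' Iic (t - x j)) ∪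
      Y ⁻¹' Iic (t - x k) := by
    intro ω (hω : X ω + Y ω ≤ t)
    by_cases h0 : X ω ≤ x 0
    · exact Or.inl (Or.inl h0)
    by_cases hk : X ω ≤ x k
    · obtain ⟨j, hj, hXj⟩ := mem_iUnion₂.1 (Ioc_subset_biUnion_Ioc k x ⟨not_le.1 h0, hk⟩)
      refine Or.inl (Or.inr (mem_iUnion₂.2 ⟨j, hj, hXj, ?_⟩))
      show Y ω ≤ t - x j
      linarith [hXj.1]
    · refine Or.inr (?_ : Y ω ≤ t - x k)
      linarith [not_le.1 hk]
  calc μ.real {ω | X ω + Y ω ≤ t}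
      ≤ μ.real (X ⁻¹' Iic (x 0) ∪
          (⋃ j ∈ Finset.range k, X ⁻¹' Ioc (x j) (x (j + 1)) ∩ Y ⁻¹' Iic (t - x j)) ∪
          Y ⁻¹' Iic (t - x k)) := measureReal_mono hcover
    _ ≤ upperCellSum μ X Y x k t := by
      refine (measureReal_union_le _ _).trans (add_le_add_left ?_ _)
      exact (measureReal_union_le _ _).trans
        (add_le_add_right (measureReal_biUnion_finset_le _ _) _)

end CellSums

section ProductCells

variable {ρ₁ ρ₂ : Measure ℝ} {x : ℕ → ℝ} {k : ℕ} {t : ℝ}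

theorem lowerCellSum_prod [SigmaFinite ρ₂] :
    lowerCellSum (ρ₁.prod ρ₂) Prod.fst Prod.snd x k t =
      ∑ j ∈ Finset.range k, ρ₁.real (Ioc (x j) (x (j + 1))) * ρ₂.real (Iic (t - x (j + 1))) := by
  simp only [lowerCellSum, ← Set.prod_eq, measureReal_prod_prod]

theorem upperCellSum_prod [IsProbabilityMeasure ρ₁] [IsProbabilityMeasure ρ₂] :
    upperCellSum (ρ₁.prod ρ₂) Prod.fst Prod.snd x k t =
      ρ₁.real (Iic (x 0)) +
        ∑ j ∈ Finset.range k, ρ₁.real (Ioc (x j) (x (j + 1))) * ρ₂.real (Iic (t - x j)) +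
        ρ₂.real (Iic (t - x k)) := by
  simp only [upperCellSum, ← Set.prod_eq]
  simp only [← prod_univ, ← univ_prod, measureReal_prod_prod, probReal_univ, mul_one, one_mul]

variable {Ω : Type*} [MeasurableSpace Ω] {μ : Measure Ω} {X Y : ℕ → Ω → ℝ}

theorem tendsto_lowerCellSum_prod [SigmaFinite ρ₂]
    (hcell : ∀ j s, Tendsto (fun n => μ.real (X n ⁻¹' Ioc (x j) (x (j + 1)) ∩ Y n ⁻¹' Iic s))
      atTop (𝓝 (ρ₁.real (Ioc (x j) (x (j + 1))) * ρ₂.real (Iic s)))) :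
    Tendsto (fun n => lowerCellSum μ (X n) (Y n) x k t) atTop
      (𝓝 (lowerCellSum (ρ₁.prod ρ₂) Prod.fst Prod.snd x k t)) := by
  rw [lowerCellSum_prod]
  exact tendsto_finsetSum _ fun j _ => hcell j _

theorem tendsto_upperCellSum_prod [IsProbabilityMeasure ρ₁] [IsProbabilityMeasure ρ₂]
    (hleft : Tendsto (fun n => μ.real (X n ⁻¹' Iic (x 0))) atTop (𝓝 (ρ₁.real (Iic (x 0)))))
    (hcell : ∀ j s, Tendsto (fun n => μ.real (X n ⁻¹' Ioc (x j) (x (j + 1)) ∩ Y n ⁻¹' Iic s))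
      atTop (𝓝 (ρ₁.real (Ioc (x j) (x (j + 1))) * ρ₂.real (Iic s))))
    (hright : ∀ s, Tendsto (fun n => μ.real (Y n ⁻¹' Iic s)) atTop (𝓝 (ρ₂.real (Iic s)))) :
    Tendsto (fun n => upperCellSum μ (X n) (Y n) x k t) atTop
      (𝓝 (upperCellSum (ρ₁.prod ρ₂) Prod.fst Prod.snd x k t)) := by
  rw [upperCellSum_prod]
  exact (hleft.add (tendsto_finsetSum _ fun j _ => hcell j _)).add (hright _)

theorem upperCellSum_prod_sub_lowerCellSum_prod_le [IsProbabilityMeasure ρ₁]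
    [IsProbabilityMeasure ρ₂] (hx : Monotone x) {ε : ℝ} (hε : 0 ≤ ε)
    (hosc : ∀ j < k, ρ₂.real (Iic (t - x j)) - ρ₂.real (Iic (t - x (j + 1))) ≤ ε) :
    upperCellSum (ρ₁.prod ρ₂) Prod.fst Prod.snd x k t -
        lowerCellSum (ρ₁.prod ρ₂) Prod.fst Prod.snd x k t ≤
      ρ₁.real (Iic (x 0)) + ε + ρ₂.real (Iic (t - x k)) := by
  have hcells : ∑ j ∈ Finset.range k, ρ₁.real (Ioc (x j) (x (j + 1))) ≤ 1 := by
    rw [← measureReal_biUnion_finset (f := fun j => Ioc (x j) (x (j + 1)))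
      (fun i _ j _ hij => hx.pairwise_disjoint_on_Ioc_succ hij) (fun j _ => measurableSet_Ioc)]
    exact measureReal_le_one
  have hsum : ∑ j ∈ Finset.range k, ρ₁.real (Ioc (x j) (x (j + 1))) * ρ₂.real (Iic (t - x j)) -
      ∑ j ∈ Finset.range k, ρ₁.real (Ioc (x j) (x (j + 1))) * ρ₂.real (Iic (t - x (j + 1))) ≤
      ε := by
    calc _ = ∑ j ∈ Finset.range k, ρ₁.real (Ioc (x j) (x (j + 1))) *
            (ρ₂.real (Iic (t - x j)) - ρ₂.real (Iic (t - x (j + 1)))) := by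
          rw [← Finset.sum_sub_distrib]
          simp_rw [mul_sub]
      _ ≤ ∑ j ∈ Finset.range k, ρ₁.real (Ioc (x j) (x (j + 1))) * ε :=
          Finset.sum_le_sum fun j hj =>
            mul_le_mul_of_nonneg_left (hosc j (Finset.mem_range.1 hj)) measureReal_nonneg
      _ ≤ ε := by
          rw [← Finset.sum_mul]
          exact mul_le_of_le_one_left hε hcells
  rw [upperCellSum_prod, lowerCellSum_prod]
  linarith

end ProductCells

theorem tendsto_measureReal_add_le_of_tendsto_cells {Ω : Type*} [MeasurableSpace Ω]
    {μ : Measure Ω} [IsFiniteMeasure μ] {X Y : ℕ → Ω → ℝ} (hX : ∀ n, Measurable (X n))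
    (hY : ∀ n, Measurable (Y n)) {G F : StieltjesFunction ℝ}
    (hG0 : Tendsto G atBot (𝓝 0)) (hG1 : Tendsto G atTop (𝓝 1))
    (hF0 : Tendsto F atBot (𝓝 0)) (hF1 : Tendsto F atTop (𝓝 1)) (hFcont : Continuous F)
    {D : Set ℝ} (hD : Dense D)
    (hleft : ∀ a ∈ D, Tendsto (fun n => μ.real (X n ⁻¹' Iic a)) atTop (𝓝 (G a)))
    (hcell : ∀ a ∈ D, ∀ b ∈ D, a ≤ b → ∀ s, Tendsto
      (fun n => μ.real (X n ⁻¹' Ioc a b ∩ Y n ⁻¹' Iic s)) atTop (𝓝 (F s * (G b - G a))))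
    (hright : ∀ s, Tendsto (fun n => μ.real (Y n ⁻¹' Iic s)) atTop (𝓝 (F s))) (t : ℝ) :
    Tendsto (fun n => μ.real {ω | X n ω + Y n ω ≤ t}) atTop (𝓝 (∫ x, F (t - x) ∂G.measure)) := by
  have := G.isProbabilityMeasure hG0 hG1
  have := F.isProbabilityMeasure hF0 hF1
  have hg : UniformContinuous fun y => F (t - y) :=
    (hFcont.uniformContinuous_of_tendsto_atBot_atTop hF0 hF1).comp
      (uniformContinuous_const.sub uniformContinuous_id)
  have hg0 : Tendsto (fun y => F (t - y)) atTop (𝓝 0) :=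
    hF0.comp (by simpa only [sub_eq_add_neg] using
      tendsto_atBot_add_const_left atTop t tendsto_neg_atTop_atBot :
        Tendsto (fun y : ℝ => t - y) atTop atBot)
  rw [integral_comp_sub_eq_measureReal_prod F hF0 t]
  refine tendsto_of_forall_bracket fun ε hε => ?_
  obtain ⟨k, x, hx, hxD, hx0, hxk, hosc⟩ :=
    exists_strictMono_mem_dense_fine_partition hD hG0 hg hg0 (div_pos hε three_pos)
  have hcell' (j : ℕ) (s : ℝ) : Tendsto
      (fun n => μ.real (X n ⁻¹' Ioc (x j) (x (j + 1)) ∩ Y n ⁻¹' Iic s)) atTop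
      (𝓝 (G.measure.real (Ioc (x j) (x (j + 1))) * F.measure.real (Iic s))) := by
    rw [G.measureReal_Ioc (hx.monotone j.le_succ), F.measureReal_Iic hF0, mul_comm]
    exact hcell _ (hxD j) _ (hxD (j + 1)) (hx.monotone j.le_succ) s
  refine ⟨fun n => lowerCellSum μ (X n) (Y n) x k t, fun n => upperCellSum μ (X n) (Y n) x k t,
    _, _, tendsto_lowerCellSum_prod hcell',
    tendsto_upperCellSum_prod (by simpa only [G.measureReal_Iic hG0] using hleft _ (hxD 0))
      hcell' (by simpa only [F.measureReal_Iic hF0] using hright),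
    fun n => ⟨lowerCellSum_le (hX n) (hY n) hx.monotone, le_upperCellSum⟩,
    lowerCellSum_le measurable_fst measurable_snd hx.monotone, le_upperCellSum, ?_⟩
  refine (upperCellSum_prod_sub_lowerCellSum_prod_le hx.monotone (div_pos hε three_pos).le
    fun j _ => ?_).trans ?_
  · rw [F.measureReal_Iic hF0, F.measureReal_Iic hF0]
    exact (le_abs_self _).trans (hosc j).le
  · rw [G.measureReal_Iic hG0, F.measureReal_Iic hF0]
    linarith

/-- **Proposition A.1.** Let `{V_i}` be random variables such that
`h(V_1, …, V_n)` converges in distribution to `Ξ` with distribution function `G`. If `{U_n}`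
are random variables with `P{U_n − h(V_1, …, V_n) ≤ s | V_1, …, V_n} → F(s)` almost surely for
all `s ∈ ℝ`, where `F` is a continuous distribution function, then
`P(U_n ≤ t) → (G * F)(t) = ∫ F(t − x) dG(x)` for all `t ∈ ℝ`. -/
theorem stmt_9 {Ω : Type*} [MeasurableSpace Ω] (μ : Measure Ω) [IsProbabilityMeasure μ]
    (V : ℕ → Ω → ℝ) (hV : ∀ i, Measurable (V i))
    (hfun : (n : ℕ) → (Fin n → ℝ) → ℝ) (hmeas : ∀ n, Measurable (hfun n))
    (U : ℕ → Ω → ℝ) (hU : ∀ n, Measurable (U n))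
    -- `G` is the distribution function of the weak limit `Ξ` of `h(V_1, …, V_n)`
    (G : StieltjesFunction ℝ)
    (hG0 : Tendsto G atBot (nhds 0)) (hG1 : Tendsto G atTop (nhds 1))
    (hweak : ∀ s : ℝ, ContinuousAt G s →
      Tendsto (fun n => (μ {ω | hfun n (fun i => V i ω) ≤ s}).toReal) atTop (nhds (G s)))
    -- `F` is a continuous distribution function
    (F : ℝ → ℝ) (hFmono : Monotone F) (hFcont : Continuous F)
    (hF0 : Tendsto F atBot (nhds 0)) (hF1 : Tendsto F atTop (nhds 1))
    -- conditional convergence: for all `s`, a.s.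
    -- `P{U_n − h(V_1, …, V_n) ≤ s | V_1, …, V_n} → F(s)`
    (hcond : ∀ s : ℝ, ∀ᵐ ω ∂μ,
      Tendsto (fun n =>
          (μ[Set.indicator {ω' | U n ω' - hfun n (fun i => V i ω') ≤ s} (fun _ => (1 : ℝ))
            | MeasurableSpace.comap (fun ω' (i : Fin n) => V i ω') inferInstance]) ω)
        atTop (nhds (F s))) :
    ∀ t : ℝ, Tendsto (fun n => (μ {ω | U n ω ≤ t}).toReal) atTop
      (nhds (∫ x, F (t - x) ∂G.measure)) := by
  intro t
  let F' : StieltjesFunction ℝ := ⟨F, hFmono, fun x => hFcont.continuousWithinAt⟩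
  set H : ℕ → Ω → ℝ := fun n ω => hfun n (fun i => V i ω)
  set Y : ℕ → Ω → ℝ := fun n ω => U n ω - H n ω
  have hVn (n : ℕ) : Measurable fun ω (i : Fin n) => V i ω := measurable_pi_lambda _ fun i => hV i
  have hH (n : ℕ) : Measurable[MeasurableSpace.comap (fun ω (i : Fin n) => V i ω) inferInstance]
      (H n) := (hmeas n).comp (comap_measurable _)
  have hY (n : ℕ) : Measurable (Y n) := (hU n).sub ((hmeas n).comp (hVn n))
  have hU_eq (n : ℕ) : {ω | U n ω ≤ t} = {ω | H n ω + Y n ω ≤ t} := by simp [Y]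
  simp_rw [hU_eq, ← measureReal_def]
  refine tendsto_measureReal_add_le_of_tendsto_cells (F := F') (fun n => (hmeas n).comp (hVn n))
    hY hG0 hG1 hF0 hF1 hFcont (G.mono.countable_not_continuousAt.dense_compl ℝ)
    (fun a ha => hweak a (not_not.1 ha)) (fun a ha b hb hab s => ?_) (fun s => ?_) t
  · exact tendsto_measureReal_preimage_Ioc_inter_of_tendsto_condExp (fun n => (hVn n).comap_le)
      hH hY hab (hweak a (not_not.1 ha)) (hweak b (not_not.1 hb)) (hcond s)
  · simpa using tendsto_measureReal_inter_of_tendsto_condExp (fun n => (hVn n).comap_le)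
      (fun n => MeasurableSet.univ) (fun n => hY n measurableSet_Iic) (hcond s)
      (tendsto_const_nhds (x := μ.real univ))
end

section
/- Let g_1, …, g_n ∈ ℝ^r and suppose t ∈ ℝ^r satisfies 1 + t^T g_i > 0 for every i and Σ_{i=1}^n g_i / (1 + t^T g_i) = 0, and set p_i = n^{-1} (1 + t^T g_i)^{-1}. Then for any nonnegative weights q_1, …, q_n with Σ_{i=1}^n q_i = 1 and Σ_{i=1}^n q_i g_i = 0, one has Π_{i=1}^n q_i ≤ Π_{i=1}^n p_i. Consequently the empirical likelihood sup{Π q_i : q_i ≥ 0, Σ q_i = 1, Σ q_i g_i = 0} is attained at the weights p_i and equals Π_{i=1}^n n^{-1}(1 + t^T g_i)^{-1}. -/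
/-!
Put `a i = 1 + tᵀ g_i`. Any feasible `q` satisfies `Σ q_i a_i = Σ q_i + tᵀ Σ q_i g_i = 1`, so by
AM-GM `Π q_i a_i ≤ n⁻ⁿ`, i.e. `Π q_i ≤ Π n⁻¹ a_i⁻¹`. Dotting the equation for `t` with `t` gives
`Σ a_i⁻¹ = Σ a_i⁻¹ a_i = n`, so the weights `p_i = n⁻¹ a_i⁻¹` are themselves feasible.
-/

open Matrix Finset

lemma sum_mul_one_add_dotProduct_of_sum_smul_eq_zero {ι m R : Type*} [Fintype ι] [Fintype m]
    [CommSemiring R] (c : ι → R) (g : ι → m → R) (t : m → R) (h : ∑ i, c i • g i = 0) :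
    ∑ i, c i * (1 + t ⬝ᵥ g i) = ∑ i, c i := by
  have hdot : ∑ i, c i * (t ⬝ᵥ g i) = t ⬝ᵥ ∑ i, c i • g i := by
    simp only [dotProduct_sum, dotProduct_smul, smul_eq_mul]
  simp only [mul_add, mul_one, sum_add_distrib, hdot, h, dotProduct_zero, add_zero]

lemma prod_le_inv_card_pow_of_sum_eq_one {ι : Type*} [Fintype ι] (x : ι → ℝ)
    (hx : ∀ i, 0 ≤ x i) (hsum : ∑ i, x i = 1) :
    ∏ i, x i ≤ ((Fintype.card ι : ℝ)⁻¹) ^ Fintype.card ι := by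
  have hcard : Fintype.card ι ≠ 0 := by
    rintro h
    simp [Fintype.card_eq_zero_iff.mp h] at hsum
  have amgm := Real.geom_mean_le_arith_mean univ (fun _ => 1) x (by simp)
    (by simp [Nat.pos_of_ne_zero hcard]) (fun i _ => hx i)
  simp only [Real.rpow_one, sum_const, card_univ, nsmul_eq_mul, mul_one, one_mul, hsum,
    one_div] at amgm
  have hprod : 0 ≤ ∏ i, x i := prod_nonneg fun i _ => hx i
  calc ∏ i, x i = ((∏ i, x i) ^ ((Fintype.card ι : ℝ)⁻¹)) ^ Fintype.card ι :=
        (Real.rpow_inv_natCast_pow hprod hcard).symm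
    _ ≤ ((Fintype.card ι : ℝ)⁻¹) ^ Fintype.card ι :=
        pow_le_pow_left₀ (Real.rpow_nonneg hprod _) amgm _

lemma prod_le_prod_inv_card_mul_inv_of_sum_mul_eq_one {ι : Type*} [Fintype ι] (a q : ι → ℝ)
    (ha : ∀ i, 0 < a i) (hq : ∀ i, 0 ≤ q i) (hqa : ∑ i, q i * a i = 1) :
    ∏ i, q i ≤ ∏ i, (Fintype.card ι : ℝ)⁻¹ * (a i)⁻¹ := by
  calc ∏ i, q i = (∏ i, q i * a i) * ∏ i, (a i)⁻¹ := by
        rw [← prod_mul_distrib]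
        exact prod_congr rfl fun i _ => by rw [mul_assoc, mul_inv_cancel₀ (ha i).ne', mul_one]
    _ ≤ ((Fintype.card ι : ℝ)⁻¹) ^ Fintype.card ι * ∏ i, (a i)⁻¹ :=
        mul_le_mul_of_nonneg_right
          (prod_le_inv_card_pow_of_sum_eq_one _ (fun i => mul_nonneg (hq i) (ha i).le) hqa)
          (prod_nonneg fun i _ => inv_nonneg.mpr (ha i).le)
    _ = ∏ i, (Fintype.card ι : ℝ)⁻¹ * (a i)⁻¹ := by
        rw [prod_mul_distrib, prod_const, card_univ]

/-- Let `g_1, …, g_n ∈ ℝ^r` and suppose `t ∈ ℝ^r` satisfies `1 + tᵀ g_i > 0`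
for every `i` and `Σ_i g_i / (1 + tᵀ g_i) = 0`, and set `p_i = n⁻¹ (1 + tᵀ g_i)⁻¹`. Then for any
nonnegative weights `q_i` with `Σ q_i = 1` and `Σ q_i g_i = 0` one has `Π q_i ≤ Π p_i`;
consequently the empirical likelihood `sup{Π q_i : q_i ≥ 0, Σ q_i = 1, Σ q_i g_i = 0}` is
attained at the weights `p_i` and equals `Π_i n⁻¹ (1 + tᵀ g_i)⁻¹`. -/
theorem stmt_11 (n r : ℕ) (hn : 0 < n) (g : Fin n → Fin r → ℝ) (t : Fin r → ℝ)
    (hpos : ∀ i, 0 < 1 + t ⬝ᵥ g i)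
    (hsol : ∑ i, (1 + t ⬝ᵥ g i)⁻¹ • g i = 0) :
    (∀ q : Fin n → ℝ, (∀ i, 0 ≤ q i) → ∑ i, q i = 1 → ∑ i, q i • g i = 0 →
        ∏ i, q i ≤ ∏ i, (n : ℝ)⁻¹ * (1 + t ⬝ᵥ g i)⁻¹) ∧
      IsGreatest
        {x : ℝ | ∃ q : Fin n → ℝ,
          (∀ i, 0 ≤ q i) ∧ ∑ i, q i = 1 ∧ ∑ i, q i • g i = 0 ∧ x = ∏ i, q i}
        (∏ i, (n : ℝ)⁻¹ * (1 + t ⬝ᵥ g i)⁻¹) := by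
  have hle : ∀ q : Fin n → ℝ, (∀ i, 0 ≤ q i) → ∑ i, q i = 1 → ∑ i, q i • g i = 0 →
      ∏ i, q i ≤ ∏ i, (n : ℝ)⁻¹ * (1 + t ⬝ᵥ g i)⁻¹ := fun q hq hq1 hqg => by
    simpa using prod_le_prod_inv_card_mul_inv_of_sum_mul_eq_one _ q hpos hq
      (by rw [sum_mul_one_add_dotProduct_of_sum_smul_eq_zero q g t hqg, hq1])
  have hsum_inv : ∑ i, (1 + t ⬝ᵥ g i)⁻¹ = n := by
    have h := sum_mul_one_add_dotProduct_of_sum_smul_eq_zero _ g t hsol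
    simp only [fun i => inv_mul_cancel₀ (hpos i).ne', sum_const, card_univ, Fintype.card_fin,
      nsmul_eq_mul, mul_one] at h
    exact h.symm
  refine ⟨hle, ⟨fun i => (n : ℝ)⁻¹ * (1 + t ⬝ᵥ g i)⁻¹, fun i => by have := hpos i; positivity,
    ?_, ?_, rfl⟩, ?_⟩
  · rw [← mul_sum, hsum_inv, inv_mul_cancel₀ (by exact_mod_cast hn.ne')]
  · simp only [mul_smul, ← smul_sum, hsol, smul_zero]
  · rintro x ⟨q, hq, hq1, hqg, rfl⟩
    exact hle q hq hq1 hqg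
end
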